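/- arXiv:2111.04409 — 4 statements merged into one kernel-verified Lean document; each statement's English description precedes it below -/
import Mathlib

section
/- Let V be a real inner product space, h₁,…,h_M ∈ V with M ≥ 1, y ∈ V, f = (1/M)·∑_{i=1}^M h_i, and let ℓ_λ = (1/M)·∑_{i=1}^M ‖h_i − y‖² − (λ/M)·∑_{i=1}^M ‖h_i − f‖² be the NCL loss. For λ = 1 the NCL loss equals the squared ensemble error: ℓ_1 = ‖f − y‖². -/
open Finset

/- Huygens–Steiner: expanding `‖(h i - c) + (c - y)‖²`, the cross terms `2 ⟪h i - c, c - y⟫`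
cancel in the sum because the deviations `h i - c` sum to zero. -/
theorem sum_norm_sub_sq_eq_of_sum_eq_card_smul {V ι : Type*} [NormedAddCommGroup V]
    [InnerProductSpace ℝ V] (s : Finset ι) (h : ι → V) {c : V} (hc : ∑ i ∈ s, h i = #s • c)
    (y : V) :
    ∑ i ∈ s, ‖h i - y‖ ^ 2 = ∑ i ∈ s, ‖h i - c‖ ^ 2 + #s * ‖c - y‖ ^ 2 := by
  have hdev : ∑ i ∈ s, (h i - c) = 0 := by
    rw [sum_sub_distrib, hc, sum_const, sub_self]
  have hcross : ∑ i ∈ s, inner ℝ (h i - c) (c - y) = 0 := by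
    rw [← sum_inner, hdev, inner_zero_left]
  calc ∑ i ∈ s, ‖h i - y‖ ^ 2
      = ∑ i ∈ s, (‖h i - c‖ ^ 2 + 2 * inner ℝ (h i - c) (c - y) + ‖c - y‖ ^ 2) := by
        refine sum_congr rfl fun i _ => ?_
        rw [← norm_add_sq_real, sub_add_sub_cancel]
    _ = ∑ i ∈ s, ‖h i - c‖ ^ 2 + #s * ‖c - y‖ ^ 2 := by
        rw [sum_add_distrib, sum_add_distrib, ← mul_sum, hcross, sum_const, nsmul_eq_mul,
          mul_zero, add_zero]

/-- **NCL loss at `λ = 1`.**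
For predictions `h 1, …, h M` in a real inner product space `V`, `M ≥ 1`, a target `y ∈ V`,
and the ensemble average `f = (1/M) • ∑ i, h i`, the NCL loss
`ℓ_λ = (1/M)·∑ ‖h i − y‖² − (λ/M)·∑ ‖h i − f‖²` at `λ = 1` equals the squared ensemble
error: `ℓ_1 = ‖f − y‖²`. -/
theorem ncl_loss_at_one
    {V : Type*} [NormedAddCommGroup V] [InnerProductSpace ℝ V]
    (M : ℕ) (hM : 1 ≤ M) (h : Fin M → V) (y : V) (f : V)
    (hf : f = (1 / (M : ℝ)) • ∑ i, h i) :
    (1 / (M : ℝ)) * ∑ i, ‖h i - y‖ ^ 2 - ((1 : ℝ) / (M : ℝ)) * ∑ i, ‖h i - f‖ ^ 2 =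
      ‖f - y‖ ^ 2 := by
  have hM0 : (M : ℝ) ≠ 0 := Nat.cast_ne_zero.mpr (by omega)
  have hmean : ∑ i, h i = #(univ : Finset (Fin M)) • f := by
    rw [card_univ, Fintype.card_fin, ← Nat.cast_smul_eq_nsmul ℝ, hf, smul_smul,
      mul_one_div_cancel hM0, one_smul]
  rw [sum_norm_sub_sq_eq_of_sum_eq_card_smul univ h hmean y, card_univ, Fintype.card_fin]
  field_simp
  ring
end

section
/- Let V be a real inner product space, h₁,…,h_M ∈ V with M ≥ 1, y ∈ V, f = (1/M)·∑_{i=1}^M h_i, and let ℓ_λ = (1/M)·∑_{i=1}^M ‖h_i − y‖² − (λ/M)·∑_{i=1}^M ‖h_i − f‖² be the NCL loss. If λ ≤ 1 then ℓ_λ ≥ ‖f − y‖², and if λ ≥ 1 then ℓ_λ ≤ ‖f − y‖². In particular, for λ ≤ 1 the NCL loss upper-bounds the squared ensemble error. -/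
/-!
Since the deviations `h i - f` sum to zero, the cross terms in `‖h i - y‖² = ‖(h i - f) + (f - y)‖²`
cancel, giving `∑ ‖h i - y‖² = ∑ ‖h i - f‖² + M ‖f - y‖²`. Hence the NCL loss equals
`‖f - y‖² + (1 - λ)/M · ∑ ‖h i - f‖²`, and the sign of `1 - λ` decides the inequality.
-/

open Finset

section Ambiguity

variable {ι V : Type*} [Fintype ι] [NormedAddCommGroup V] [InnerProductSpace ℝ V]

theorem sum_sub_average_eq_zero {E : Type*} [AddCommGroup E] [Module ℝ E] [Nonempty ι]
    (h : ι → E) : ∑ i, (h i - (1 / (Fintype.card ι : ℝ)) • ∑ j, h j) = 0 := by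
  have hcard : (Fintype.card ι : ℝ) ≠ 0 := by positivity
  rw [sum_sub_distrib, sum_const, card_univ, ← Nat.cast_smul_eq_nsmul ℝ, smul_smul,
    mul_one_div_cancel hcard, one_smul, sub_self]

/-- The Krogh–Vedelsby ambiguity decomposition. -/
theorem sum_norm_sub_sq_eq_of_sum_sub_eq_zero (h : ι → V) {f : V} (hf : ∑ i, (h i - f) = 0)
    (y : V) :
    ∑ i, ‖h i - y‖ ^ 2 = ∑ i, ‖h i - f‖ ^ 2 + Fintype.card ι * ‖f - y‖ ^ 2 := by
  have hcross : ∑ i, inner ℝ (h i - f) (f - y) = 0 := by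
    rw [← sum_inner, hf, inner_zero_left]
  calc ∑ i, ‖h i - y‖ ^ 2
      = ∑ i, (‖h i - f‖ ^ 2 + 2 * inner ℝ (h i - f) (f - y) + ‖f - y‖ ^ 2) := by
        refine sum_congr rfl fun i _ => ?_
        rw [← norm_add_sq_real, sub_add_sub_cancel]
    _ = ∑ i, ‖h i - f‖ ^ 2 + Fintype.card ι * ‖f - y‖ ^ 2 := by
        rw [sum_add_distrib, sum_add_distrib, ← mul_sum, hcross, sum_const, card_univ,
          nsmul_eq_mul]
        ring

end Ambiguity

/-- **NCL loss bounds the squared ensemble error.**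
For predictions `h 1, …, h M` in a real inner product space `V`, `M ≥ 1`, a target `y ∈ V`,
the ensemble average `f = (1/M) • ∑ i, h i`, and the NCL loss
`ℓ_λ = (1/M)·∑ ‖h i − y‖² − (λ/M)·∑ ‖h i − f‖²`:
if `λ ≤ 1` then `ℓ_λ ≥ ‖f − y‖²`, and if `λ ≥ 1` then `ℓ_λ ≤ ‖f − y‖²`. -/
theorem ncl_loss_bounds_ensemble_error
    {V : Type*} [NormedAddCommGroup V] [InnerProductSpace ℝ V]
    (M : ℕ) (hM : 1 ≤ M) (h : Fin M → V) (y : V) (f : V)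
    (hf : f = (1 / (M : ℝ)) • ∑ i, h i) (lam : ℝ) :
    (lam ≤ 1 →
      ‖f - y‖ ^ 2 ≤
        (1 / (M : ℝ)) * ∑ i, ‖h i - y‖ ^ 2 - (lam / (M : ℝ)) * ∑ i, ‖h i - f‖ ^ 2) ∧
    (1 ≤ lam →
      (1 / (M : ℝ)) * ∑ i, ‖h i - y‖ ^ 2 - (lam / (M : ℝ)) * ∑ i, ‖h i - f‖ ^ 2 ≤
        ‖f - y‖ ^ 2) := by
  have : NeZero M := ⟨by omega⟩
  have hdev : ∑ i, (h i - f) = 0 := by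
    simpa [hf] using sum_sub_average_eq_zero h
  have hloss : (1 / (M : ℝ)) * ∑ i, ‖h i - y‖ ^ 2 - (lam / (M : ℝ)) * ∑ i, ‖h i - f‖ ^ 2
      = ‖f - y‖ ^ 2 + (1 - lam) / M * ∑ i, ‖h i - f‖ ^ 2 := by
    rw [sum_norm_sub_sq_eq_of_sum_sub_eq_zero h hdev y, Fintype.card_fin]
    field_simp
    ring
  have hvar : 0 ≤ (∑ i, ‖h i - f‖ ^ 2) / M := by positivity
  rw [hloss, div_mul_eq_mul_div, mul_div_assoc]
  constructor <;> intro hlam <;> nlinarith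
end

section
/- Let (Ω, μ) be a probability space and M : Ω → ℝ a square-integrable random variable with E[M] ≥ 0 and E[M²] > 0. Then μ({ω : M(ω) ≤ 0}) ≤ 1 − E[M]² / E[M²]. This is the second-moment form of the C-bound: the 0-1 loss of a voting classifier, written as the probability that its margin M is non-positive, is bounded by one minus the squared first moment of the margin divided by its second moment. -/
/-!
Cantelli's argument: for `t ≥ 0` the square `(1 - t M)²` is at least `1` wherever `M ≤ 0`, so
Markov's inequality gives `μ(M ≤ 0) ≤ E[(1 - t M)²] = 1 - 2 t E[M] + t² E[M²]`. The choice
`t = E[M] / E[M²]` minimises the right-hand side, making it `1 - E[M]² / E[M²]`.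
-/

open MeasureTheory

namespace MeasureTheory

variable {α : Type*} [MeasurableSpace α] {μ : Measure α}

lemma measure_le_ofReal_integral_of_one_le {f : α → ℝ} (hf : Integrable f μ)
    (hf_nonneg : 0 ≤ᵐ[μ] f) {s : Set α} (hs : ∀ x ∈ s, 1 ≤ f x) :
    μ s ≤ ENNReal.ofReal (∫ x, f x ∂μ) := by
  rw [ofReal_integral_eq_lintegral_ofReal hf hf_nonneg]
  exact meas_le_lintegral₀ hf.aemeasurable.ennreal_ofReal fun x hx ↦
    ENNReal.one_le_ofReal.mpr (hs x hx)

lemma measure_nonpos_le_integral_one_sub_mul_sq [IsFiniteMeasure μ] {M : α → ℝ}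
    (hM : MemLp M 2 μ) {t : ℝ} (ht : 0 ≤ t) :
    μ {x | M x ≤ 0} ≤ ENNReal.ofReal (∫ x, (1 - t * M x) ^ 2 ∂μ) := by
  refine measure_le_ofReal_integral_of_one_le ?_ (.of_forall fun x ↦ sq_nonneg _) ?_
  · exact ((memLp_const 1).sub (hM.const_mul t)).integrable_sq
  · intro x (hx : M x ≤ 0)
    nlinarith [mul_nonpos_of_nonneg_of_nonpos ht hx]

lemma integral_one_sub_mul_sq [IsProbabilityMeasure μ] {M : α → ℝ} (hM : MemLp M 2 μ)
    (t : ℝ) :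
    ∫ x, (1 - t * M x) ^ 2 ∂μ = 1 - 2 * t * ∫ x, M x ∂μ + t ^ 2 * ∫ x, M x ^ 2 ∂μ := by
  have hM_int : Integrable M μ := hM.integrable one_le_two
  have hM_sq_int : Integrable (fun x ↦ M x ^ 2) μ := hM.integrable_sq
  have hexpand : (fun x ↦ (1 - t * M x) ^ 2) =
      fun x ↦ 1 - (2 * t * M x - t ^ 2 * M x ^ 2) := by
    ext x; ring
  rw [hexpand, integral_sub (integrable_const 1) ((hM_int.const_mul _).sub'
    (hM_sq_int.const_mul _)), integral_sub (hM_int.const_mul _) (hM_sq_int.const_mul _),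
    integral_const_mul, integral_const_mul]
  simp only [integral_const, probReal_univ, smul_eq_mul, mul_one]
  ring

end MeasureTheory

/-- **Second-moment form of the C-bound.**
For a square-integrable real random variable `M` (the margin of a voting classifier) on a
probability space `(Ω, μ)` with `E[M] ≥ 0` and `E[M²] > 0`, the probability that the margin
is non-positive (i.e. the 0-1 loss of the classifier) satisfies
`μ(M ≤ 0) ≤ 1 − E[M]² / E[M²]`. -/
theorem c_bound_second_moment
    {Ω : Type*} [MeasurableSpace Ω] (μ : Measure Ω) [IsProbabilityMeasure μ]
    (M : Ω → ℝ) (hM : MemLp M 2 μ)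
    (hmean : 0 ≤ ∫ ω, M ω ∂μ) (hsq : 0 < ∫ ω, (M ω) ^ 2 ∂μ) :
    μ {ω | M ω ≤ 0} ≤
      ENNReal.ofReal (1 - (∫ ω, M ω ∂μ) ^ 2 / ∫ ω, (M ω) ^ 2 ∂μ) := by
  have hbound := measure_nonpos_le_integral_one_sub_mul_sq hM (div_nonneg hmean hsq.le)
  rw [integral_one_sub_mul_sq hM] at hbound
  convert hbound using 2
  field_simp
  ring
end

section
/- (Deterministic C-bound for uniform majority votes.) Let (Ω, μ) be a probability space, Y : Ω → {−1, +1} a measurable label, and h₁,…,h_M : Ω → {−1, +1} measurable classifiers with M ≥ 1; let f = (1/M)·∑_{i=1}^M h_i and let r̄ = (1/M)·∑_{i=1}^M μ({h_i ≠ Y}) be the average 0-1 risk of the voters. If r̄ < 1/2 and E[f²] > 0, then the 0-1 risk of the majority vote satisfies μ({ω : Y(ω)·f(ω) ≤ 0}) ≤ 1 − (1 − 2·r̄)² / E[f²]. -/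
/-!
Write `g = Y·f` for the margin. Since `|g| ≤ 1` pointwise and `Y·hᵢ = 1 - 2·[hᵢ ≠ Y]`, the mean
margin is `E[g] = 1 - 2·r̄ > 0`, while `E[g²] = E[f²]` because `Y² = 1`. As `g ≤ g·1_{g>0}`,
Cauchy–Schwarz gives `E[g]² ≤ E[g·1_{g>0}]² ≤ E[g²]·μ(g > 0)`, and `μ(g ≤ 0) = 1 - μ(g > 0)`.
-/

open MeasureTheory

namespace MeasureTheory

variable {α : Type*} [MeasurableSpace α] {μ : Measure α} {g : α → ℝ}

theorem sq_integral_le_measureReal_univ_mul_integral_sq [IsFiniteMeasure μ] (hg : MemLp g 2 μ) :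
    (∫ x, g x ∂μ) ^ 2 ≤ μ.real Set.univ * ∫ x, g x ^ 2 ∂μ := by
  have hg₁ : Integrable g μ := hg.integrable one_le_two
  -- `∫ (t - g)² ≥ 0` is a nonnegative quadratic polynomial in `t`; its discriminant is `≤ 0`.
  have hquad : ∀ t : ℝ,
      0 ≤ μ.real Set.univ * (t * t) + (-2 * ∫ x, g x ∂μ) * t + ∫ x, g x ^ 2 ∂μ := by
    intro t
    have hexpand : ∫ x, (t - g x) ^ 2 ∂μ =
        μ.real Set.univ * (t * t) + (-2 * ∫ x, g x ∂μ) * t + ∫ x, g x ^ 2 ∂μ := by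
      simp_rw [sub_sq]
      rw [integral_add (f := fun x => t ^ 2 - 2 * t * g x)
          ((integrable_const _).sub (hg₁.const_mul _)) hg.integrable_sq,
        integral_sub (integrable_const _) (hg₁.const_mul _), integral_const, integral_const_mul]
      simp only [smul_eq_mul]
      ring
    exact hexpand ▸ integral_nonneg fun x => sq_nonneg _
  have := discrim_le_zero hquad
  rw [discrim] at this
  linarith

theorem sq_integral_le_measureReal_pos_mul_integral_sq [IsFiniteMeasure μ] (hg : MemLp g 2 μ)
    (hmean : 0 ≤ ∫ x, g x ∂μ) :
    (∫ x, g x ∂μ) ^ 2 ≤ μ.real {x | 0 < g x} * ∫ x, g x ^ 2 ∂μ := by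
  set A := {x | 0 < g x}
  have hA : NullMeasurableSet A μ :=
    nullMeasurableSet_lt aemeasurable_const hg.aestronglyMeasurable.aemeasurable
  have hcompl : ∫ x in Aᶜ, g x ∂μ ≤ 0 :=
    setIntegral_nonpos_of_ae_restrict <|
      (ae_restrict_iff'₀ hA.compl).2 (ae_of_all _ fun x hx => not_lt.1 hx)
  have hle : ∫ x, g x ∂μ ≤ ∫ x in A, g x ∂μ := by
    rw [← integral_add_compl₀ hA (hg.integrable one_le_two)]
    linarith
  calc (∫ x, g x ∂μ) ^ 2 ≤ (∫ x in A, g x ∂μ) ^ 2 := pow_le_pow_left₀ hmean hle 2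
    _ ≤ μ.real A * ∫ x in A, g x ^ 2 ∂μ := by
      simpa using sq_integral_le_measureReal_univ_mul_integral_sq (hg.restrict A)
    _ ≤ μ.real A * ∫ x, g x ^ 2 ∂μ := mul_le_mul_of_nonneg_left
      (setIntegral_le_integral hg.integrable_sq (ae_of_all _ fun x => sq_nonneg _))
      measureReal_nonneg

theorem measure_nonpos_le_one_sub_sq_integral_div_integral_sq [IsProbabilityMeasure μ]
    (hg : MemLp g 2 μ) (hmean : 0 ≤ ∫ x, g x ∂μ) :
    μ {x | g x ≤ 0} ≤ ENNReal.ofReal (1 - (∫ x, g x ∂μ) ^ 2 / ∫ x, g x ^ 2 ∂μ) := by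
  have hA : NullMeasurableSet {x | 0 < g x} μ :=
    nullMeasurableSet_lt aemeasurable_const hg.aestronglyMeasurable.aemeasurable
  have hcompl : {x | g x ≤ 0} = {x | 0 < g x}ᶜ := by
    ext x
    simp
  rw [← ofReal_measureReal, hcompl, probReal_compl_eq_one_sub₀ hA]
  gcongr
  exact div_le_of_le_mul₀ (integral_nonneg fun x => sq_nonneg _) measureReal_nonneg
    (sq_integral_le_measureReal_pos_mul_integral_sq hg hmean)

end MeasureTheory

theorem abs_eq_one_of_eq_one_or_eq_neg_one {x : ℝ} (hx : x = 1 ∨ x = -1) : |x| = 1 := by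
  rcases hx with rfl | rfl <;> norm_num

theorem abs_one_div_mul_sum_le_one {M : ℕ} {a : Fin M → ℝ} (ha : ∀ i, |a i| ≤ 1) :
    |(1 / (M : ℝ)) * ∑ i, a i| ≤ 1 := by
  rcases M.eq_zero_or_pos with rfl | hM
  · simp
  have hsum : |∑ i, a i| ≤ M := by
    simpa using (Finset.abs_sum_le_sum_abs a Finset.univ).trans (Finset.sum_le_sum fun i _ => ha i)
  rw [abs_mul, abs_of_nonneg (by positivity), one_div, inv_mul_le_one₀ (by positivity)]
  exact hsum

section MajorityVote

variable {Ω : Type*} [MeasurableSpace Ω] {μ : Measure Ω} [IsProbabilityMeasure μ]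
  {Y c : Ω → ℝ}

theorem integral_mul_eq_one_sub_two_mul_measureReal_ne (hYm : Measurable Y) (hcm : Measurable c)
    (hY : ∀ ω, Y ω = 1 ∨ Y ω = -1) (hc : ∀ ω, c ω = 1 ∨ c ω = -1) :
    ∫ ω, Y ω * c ω ∂μ = 1 - 2 * μ.real {ω | c ω ≠ Y ω} := by
  have hS : MeasurableSet {ω | c ω ≠ Y ω} := (measurableSet_eq_fun hcm hYm).compl
  have hpt : (fun ω => Y ω * c ω) = fun ω => 1 - 2 * {ω | c ω ≠ Y ω}.indicator 1 ω := by
    funext ω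
    rcases hY ω with hy | hy <;> rcases hc ω with hc' | hc' <;> norm_num [hy, hc', Set.indicator]
  rw [hpt, integral_sub (integrable_const _) ((integrable_const 1).indicator hS |>.const_mul 2),
    integral_const, integral_const_mul, integral_indicator_one hS]
  simp

theorem integral_margin_eq_one_sub_two_mul_average_risk {M : ℕ} (hM : 1 ≤ M) {h : Fin M → Ω → ℝ}
    (hYm : Measurable Y) (hm : ∀ i, Measurable (h i)) (hY : ∀ ω, Y ω = 1 ∨ Y ω = -1)
    (hvals : ∀ i ω, h i ω = 1 ∨ h i ω = -1) :
    ∫ ω, Y ω * ((1 / (M : ℝ)) * ∑ i, h i ω) ∂μ =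
      1 - 2 * ((1 / (M : ℝ)) * ∑ i, μ.real {ω | h i ω ≠ Y ω}) := by
  have hint : ∀ i, Integrable (fun ω => Y ω * h i ω) μ := fun i =>
    Integrable.of_bound (hYm.mul (hm i)).aestronglyMeasurable 1 <| ae_of_all _ fun ω => by
      simp [abs_eq_one_of_eq_one_or_eq_neg_one (hY ω),
        abs_eq_one_of_eq_one_or_eq_neg_one (hvals i ω)]
  have hM' : (M : ℝ) ≠ 0 := by exact_mod_cast (Nat.one_le_iff_ne_zero.1 hM)
  simp_rw [mul_left_comm (Y _), Finset.mul_sum Finset.univ (fun i => h i _) (Y _)]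
  rw [integral_const_mul, integral_finsetSum _ fun i _ => hint i]
  simp_rw [integral_mul_eq_one_sub_two_mul_measureReal_ne hYm (hm _) hY (hvals _),
    Finset.sum_sub_distrib, ← Finset.mul_sum, Finset.sum_const, Finset.card_univ,
    Fintype.card_fin, nsmul_one]
  field_simp

end MajorityVote

theorem deterministic_c_bound_general
    {Ω : Type*} [MeasurableSpace Ω] (μ : Measure Ω) [IsProbabilityMeasure μ]
    (M : ℕ) (hM : 1 ≤ M)
    (Y : Ω → ℝ) (hYmeas : Measurable Y) (hY : ∀ ω, Y ω = 1 ∨ Y ω = -1)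
    (h : Fin M → Ω → ℝ) (hmeas : ∀ i, Measurable (h i))
    (hvals : ∀ i ω, h i ω = 1 ∨ h i ω = -1)
    (f : Ω → ℝ) (hf : f = fun ω => (1 / (M : ℝ)) * ∑ i, h i ω)
    (rbar : ℝ) (hrbar : rbar = (1 / (M : ℝ)) * ∑ i, (μ {ω | h i ω ≠ Y ω}).toReal)
    (hrisk : rbar < 1 / 2) :
    μ {ω | Y ω * f ω ≤ 0} ≤
      ENNReal.ofReal (1 - (1 - 2 * rbar) ^ 2 / ∫ ω, (f ω) ^ 2 ∂μ) := by
  have hf_abs : ∀ ω, |f ω| ≤ 1 := fun ω => hf ▸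
    abs_one_div_mul_sum_le_one fun i => (abs_eq_one_of_eq_one_or_eq_neg_one (hvals i ω)).le
  have hfm : Measurable f := hf ▸ by fun_prop
  have hmargin : MemLp (fun ω => Y ω * f ω) 2 μ :=
    MemLp.of_bound (hYmeas.mul hfm).aestronglyMeasurable 1 <| ae_of_all _ fun ω => by
      simpa [abs_mul, abs_eq_one_of_eq_one_or_eq_neg_one (hY ω)] using hf_abs ω
  have hmean : ∫ ω, Y ω * f ω ∂μ = 1 - 2 * rbar := by
    rw [hf, hrbar]
    exact integral_margin_eq_one_sub_two_mul_average_risk hM hYmeas hmeas hY hvals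
  have hsq : ∀ ω, (Y ω * f ω) ^ 2 = f ω ^ 2 := fun ω => by
    rcases hY ω with hy | hy <;> simp [hy]
  have hbound := measure_nonpos_le_one_sub_sq_integral_div_integral_sq hmargin
    (by rw [hmean]; linarith)
  simpa only [hmean, hsq] using hbound

/-- **Deterministic C-bound for uniform majority votes.**
On a probability space `(Ω, μ)`, let `Y : Ω → {−1,+1}` be the label and
`h 1, …, h M : Ω → {−1,+1}` (`M ≥ 1`) binary classifiers, `f = (1/M)·∑ i, h i` their uniform
convex combination and `r̄ = (1/M)·∑ i, μ(h i ≠ Y)` the average 0-1 risk of the voters.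
If `r̄ < 1/2` and `E[f²] > 0`, then the 0-1 risk of the majority vote satisfies
`μ(Y·f ≤ 0) ≤ 1 − (1 − 2·r̄)² / E[f²]`. -/
theorem deterministic_c_bound
    {Ω : Type*} [MeasurableSpace Ω] (μ : Measure Ω) [IsProbabilityMeasure μ]
    (M : ℕ) (hM : 1 ≤ M)
    (Y : Ω → ℝ) (hYmeas : Measurable Y) (hY : ∀ ω, Y ω = 1 ∨ Y ω = -1)
    (h : Fin M → Ω → ℝ) (hmeas : ∀ i, Measurable (h i))
    (hvals : ∀ i ω, h i ω = 1 ∨ h i ω = -1)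
    (f : Ω → ℝ) (hf : f = fun ω => (1 / (M : ℝ)) * ∑ i, h i ω)
    (rbar : ℝ) (hrbar : rbar = (1 / (M : ℝ)) * ∑ i, (μ {ω | h i ω ≠ Y ω}).toReal)
    (hrisk : rbar < 1 / 2) (hsq : 0 < ∫ ω, (f ω) ^ 2 ∂μ) :
    μ {ω | Y ω * f ω ≤ 0} ≤
      ENNReal.ofReal (1 - (1 - 2 * rbar) ^ 2 / ∫ ω, (f ω) ^ 2 ∂μ) :=
  deterministic_c_bound_general μ M hM Y hYmeas hY h hmeas hvals f hf rbar hrbar hrisk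
end
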